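/- arXiv:1811.07734 — 2 statements merged into one kernel-verified Lean document; each statement's English description precedes it below -/
import Mathlib

section
/- Let S be a nonempty compact subset of E = EuclideanSpace ℝ (Fin d) and A ⊆ E. Then A is G-invariant with respect to S if and only if A = 𝔤_S(A). -/
open Set Pointwise

noncomputable section

/-- The Voronoi cell of `c` with respect to the set `S`. -/
def vorCell {d : ℕ} (S : Set (EuclideanSpace ℝ (Fin d))) (c : EuclideanSpace ℝ (Fin d)) :
    Set (EuclideanSpace ℝ (Fin d)) :=
  {x | ∀ c' ∈ S, ‖x - c‖ ≤ ‖x - c'‖}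

/-- `Q` is G-invariant with respect to `S`. -/
def GInvariant {d : ℕ} (S Q : Set (EuclideanSpace ℝ (Fin d))) : Prop :=
  ∀ x ∈ convexHull ℝ S, ∀ e ∈ Q, ∀ c ∈ S, e + x ∈ vorCell S c → e + x - c ∈ Q

/-- `Q` is G-invariant with respect to the collection `𝕊`. -/
def GInvariantColl {d : ℕ} (𝕊 : Set (Set (EuclideanSpace ℝ (Fin d))))
    (Q : Set (EuclideanSpace ℝ (Fin d))) : Prop :=
  ∀ S ∈ 𝕊, GInvariant S Q

/-- The set operator 𝔤_S. -/
def gOp {d : ℕ} (S A : Set (EuclideanSpace ℝ (Fin d))) : Set (EuclideanSpace ℝ (Fin d)) :=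
  ⋃ c ∈ S, (fun v => v - c) '' ((convexHull ℝ S + A) ∩ vorCell S c)

/-- The set operator 𝔤_𝕊. -/
def gOpColl {d : ℕ} (𝕊 : Set (Set (EuclideanSpace ℝ (Fin d))))
    (A : Set (EuclideanSpace ℝ (Fin d))) : Set (EuclideanSpace ℝ (Fin d)) :=
  ⋃ S ∈ 𝕊, gOp S A

/-- Iterates of 𝔤_𝕊. -/
def gIter {d : ℕ} (𝕊 : Set (Set (EuclideanSpace ℝ (Fin d))))
    (A : Set (EuclideanSpace ℝ (Fin d))) : ℕ → Set (EuclideanSpace ℝ (Fin d))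
  | 0 => A
  | n + 1 => gOpColl 𝕊 (gIter 𝕊 A n)

/-- Iterates of 𝔤_S for a single set S. -/
def gIterS {d : ℕ} (S A : Set (EuclideanSpace ℝ (Fin d))) :
    ℕ → Set (EuclideanSpace ℝ (Fin d))
  | 0 => A
  | n + 1 => gOp S (gIterS S A n)

/-- `D` is F-invariant with respect to `S`. -/
def FInvariant {d : ℕ} (S D : Set (EuclideanSpace ℝ (Fin d))) : Prop :=
  ∀ z ∈ D, ∀ c ∈ S, z ∈ vorCell S c → ∀ x ∈ convexHull ℝ S, z + x - c ∈ D

/-- `D` is F-invariant with respect to the collection `𝕊`. -/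
def FInvariantColl {d : ℕ} (𝕊 : Set (Set (EuclideanSpace ℝ (Fin d))))
    (D : Set (EuclideanSpace ℝ (Fin d))) : Prop :=
  ∀ S ∈ 𝕊, FInvariant S D

/-- The set operator 𝔭_S. -/
def pOp {d : ℕ} (S D : Set (EuclideanSpace ℝ (Fin d))) : Set (EuclideanSpace ℝ (Fin d)) :=
  convexHull ℝ S + ⋃ c ∈ S, (fun v => v - c) '' (D ∩ vorCell S c)

/-- The set operator 𝔭_𝕊. -/
def pOpColl {d : ℕ} (𝕊 : Set (Set (EuclideanSpace ℝ (Fin d))))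
    (D : Set (EuclideanSpace ℝ (Fin d))) : Set (EuclideanSpace ℝ (Fin d)) :=
  ⋃ S ∈ 𝕊, pOp S D

/-- Iterates of 𝔭_𝕊. -/
def pIter {d : ℕ} (𝕊 : Set (Set (EuclideanSpace ℝ (Fin d))))
    (D : Set (EuclideanSpace ℝ (Fin d))) : ℕ → Set (EuclideanSpace ℝ (Fin d))
  | 0 => D
  | n + 1 => pOpColl 𝕊 (pIter 𝕊 D n)

/-- The convexified set operator 𝔊_𝕊. -/
def GOpColl {d : ℕ} (𝕊 : Set (Set (EuclideanSpace ℝ (Fin d))))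
    (A : Set (EuclideanSpace ℝ (Fin d))) : Set (EuclideanSpace ℝ (Fin d)) :=
  ⋃ S ∈ 𝕊, convexHull ℝ (gOp S A)

/-- Iterates of the convexified operator 𝔊_𝕊. -/
def GIter {d : ℕ} (𝕊 : Set (Set (EuclideanSpace ℝ (Fin d))))
    (Q : Set (EuclideanSpace ℝ (Fin d))) : ℕ → Set (EuclideanSpace ℝ (Fin d))
  | 0 => convexHull ℝ Q
  | n + 1 => GOpColl 𝕊 (GIter 𝕊 Q n)

/-! Every set satisfies `A ⊆ 𝔤_S(A)`: for `e ∈ A` pick `c ∈ S` maximising `⟪e, ·⟫` on the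
compact set `S`; then `e + c` lies in the Voronoi cell of `c`, and `e = (e + c) - c`. Unfolding the
definitions, G-invariance says exactly `𝔤_S(A) ⊆ A`. -/

theorem add_mem_vorCell_of_isMaxOn_inner {d : ℕ} {S : Set (EuclideanSpace ℝ (Fin d))}
    {e c : EuclideanSpace ℝ (Fin d)} (hc : IsMaxOn (fun c' => inner ℝ e c') S c) :
    e + c ∈ vorCell S c := by
  intro c' hc'
  have hinner : 0 ≤ inner ℝ e (c - c') := by
    rw [inner_sub_right]
    exact sub_nonneg.2 (hc hc')
  have hsq : ‖e‖ ^ 2 ≤ ‖e + (c - c')‖ ^ 2 := by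
    rw [norm_add_sq_real]
    nlinarith [sq_nonneg ‖c - c'‖]
  rw [add_sub_cancel_right, add_sub_assoc]
  exact (sq_le_sq₀ (norm_nonneg _) (norm_nonneg _)).1 hsq

theorem exists_add_mem_vorCell {d : ℕ} {S : Set (EuclideanSpace ℝ (Fin d))}
    (hS : S.Nonempty) (hSc : IsCompact S) (e : EuclideanSpace ℝ (Fin d)) :
    ∃ c ∈ S, e + c ∈ vorCell S c := by
  obtain ⟨c, hcS, hmax⟩ := hSc.exists_isMaxOn hS (innerSL ℝ e).continuous.continuousOn
  exact ⟨c, hcS, add_mem_vorCell_of_isMaxOn_inner hmax⟩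

theorem mem_gOp {d : ℕ} {S A : Set (EuclideanSpace ℝ (Fin d))} {y : EuclideanSpace ℝ (Fin d)} :
    y ∈ gOp S A ↔ ∃ x ∈ convexHull ℝ S, ∃ e ∈ A, ∃ c ∈ S, e + x ∈ vorCell S c ∧ y = e + x - c := by
  simp only [gOp, mem_iUnion₂, mem_image, mem_inter_iff, mem_add]
  constructor
  · rintro ⟨c, hc, _, ⟨⟨x, hx, e, he, rfl⟩, hvor⟩, rfl⟩
    exact ⟨x, hx, e, he, c, hc, by rwa [add_comm], by rw [add_comm]⟩
  · rintro ⟨x, hx, e, he, c, hc, hvor, rfl⟩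
    exact ⟨c, hc, e + x, ⟨⟨x, hx, e, he, add_comm x e⟩, hvor⟩, rfl⟩

theorem gInvariant_iff_gOp_subset {d : ℕ} {S A : Set (EuclideanSpace ℝ (Fin d))} :
    GInvariant S A ↔ gOp S A ⊆ A := by
  constructor
  · intro hG y hy
    obtain ⟨x, hx, e, he, c, hc, hvor, rfl⟩ := mem_gOp.1 hy
    exact hG x hx e he c hc hvor
  · intro hA x hx e he c hc hvor
    exact hA (mem_gOp.2 ⟨x, hx, e, he, c, hc, hvor, rfl⟩)

theorem subset_gOp {d : ℕ} {S : Set (EuclideanSpace ℝ (Fin d))} (hS : S.Nonempty)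
    (hSc : IsCompact S) (A : Set (EuclideanSpace ℝ (Fin d))) : A ⊆ gOp S A := by
  intro e he
  obtain ⟨c, hcS, hvor⟩ := exists_add_mem_vorCell hS hSc e
  exact mem_gOp.2 ⟨c, subset_convexHull ℝ S hcS, e, he, c, hcS, hvor, (add_sub_cancel_right e c).symm⟩

theorem stmt2 {d : ℕ} (S : Set (EuclideanSpace ℝ (Fin d)))
    (hS : S.Nonempty) (hSc : IsCompact S) (A : Set (EuclideanSpace ℝ (Fin d))) :
    GInvariant S A ↔ A = gOp S A := by
  rw [gInvariant_iff_gOp_subset]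
  exact ⟨(subset_gOp hS hSc A).antisymm, fun h => h.symm.subset⟩
end
end

section
/- Let 𝕊 be a collection of nonempty compact subsets of E = EuclideanSpace ℝ (Fin d) with ⋂_{S ∈ 𝕊} S nonempty, let s₀ ∈ ⋂_{S ∈ 𝕊} S, and let D := ⋃_{S ∈ 𝕊} (convex hull of S). Then 𝔭_𝕊({s₀}) = D. Moreover, if D is F-invariant with respect to 𝕊, then D is the minimal F-invariant set with respect to 𝕊 containing s₀: every set D' that is F-invariant with respect to 𝕊 and contains s₀ satisfies D ⊆ D'. -/
open Set Pointwise

noncomputable section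

section

variable {d : ℕ}

theorem mem_vorCell_self (S : Set (EuclideanSpace ℝ (Fin d))) (c : EuclideanSpace ℝ (Fin d)) :
    c ∈ vorCell S c := fun c' _ => by simp

theorem eq_of_mem_vorCell_of_mem {S : Set (EuclideanSpace ℝ (Fin d))}
    {c v : EuclideanSpace ℝ (Fin d)} (hv : v ∈ vorCell S c) (hvS : v ∈ S) : v = c := by
  have h := hv v hvS
  rw [sub_self, norm_zero] at h
  exact sub_eq_zero.1 (norm_le_zero_iff.1 h)

theorem iUnion_sub_singleton_inter_vorCell {S : Set (EuclideanSpace ℝ (Fin d))}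
    {s₀ : EuclideanSpace ℝ (Fin d)} (hs₀ : s₀ ∈ S) :
    ⋃ c ∈ S, (fun v => v - c) '' ({s₀} ∩ vorCell S c) = {0} := by
  ext y
  simp only [mem_iUnion, mem_image, mem_inter_iff, mem_singleton_iff, exists_prop]
  constructor
  · rintro ⟨c, -, v, ⟨rfl, hv⟩, rfl⟩
    rw [eq_of_mem_vorCell_of_mem hv hs₀, sub_self]
  · rintro rfl
    exact ⟨s₀, hs₀, s₀, ⟨rfl, mem_vorCell_self S s₀⟩, sub_self s₀⟩

theorem pOp_singleton {S : Set (EuclideanSpace ℝ (Fin d))} {s₀ : EuclideanSpace ℝ (Fin d)}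
    (hs₀ : s₀ ∈ S) : pOp S {s₀} = convexHull ℝ S := by
  rw [pOp, iUnion_sub_singleton_inter_vorCell hs₀, singleton_zero, add_zero]

theorem pOpColl_singleton {𝕊 : Set (Set (EuclideanSpace ℝ (Fin d)))}
    {s₀ : EuclideanSpace ℝ (Fin d)} (hs₀ : ∀ S ∈ 𝕊, s₀ ∈ S) :
    pOpColl 𝕊 {s₀} = ⋃ S ∈ 𝕊, convexHull ℝ S :=
  iUnion₂_congr fun S hS => pOp_singleton (hs₀ S hS)

theorem FInvariant.convexHull_subset {S D : Set (EuclideanSpace ℝ (Fin d))}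
    {s₀ : EuclideanSpace ℝ (Fin d)} (hD : FInvariant S D) (hs₀S : s₀ ∈ S) (hs₀D : s₀ ∈ D) :
    convexHull ℝ S ⊆ D := fun x hx => by
  simpa using hD s₀ hs₀D s₀ hs₀S (mem_vorCell_self S s₀) x hx

end

theorem stmt15_general {d : ℕ} (𝕊 : Set (Set (EuclideanSpace ℝ (Fin d))))
    (s₀ : EuclideanSpace ℝ (Fin d)) (hs₀ : ∀ S ∈ 𝕊, s₀ ∈ S) :
    pOpColl 𝕊 {s₀} = (⋃ S ∈ 𝕊, convexHull ℝ S) ∧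
    (FInvariantColl 𝕊 (⋃ S ∈ 𝕊, convexHull ℝ S) →
      ∀ D' : Set (EuclideanSpace ℝ (Fin d)), FInvariantColl 𝕊 D' → s₀ ∈ D' →
        (⋃ S ∈ 𝕊, convexHull ℝ S) ⊆ D') :=
  ⟨pOpColl_singleton hs₀, fun _ _ hD' hs₀D' =>
    iUnion₂_subset fun S hS => (hD' S hS).convexHull_subset (hs₀ S hS) hs₀D'⟩

theorem stmt15 {d : ℕ} (𝕊 : Set (Set (EuclideanSpace ℝ (Fin d))))
    (h𝕊 : ∀ S ∈ 𝕊, S.Nonempty ∧ IsCompact S)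
    (s₀ : EuclideanSpace ℝ (Fin d)) (hs₀ : ∀ S ∈ 𝕊, s₀ ∈ S) :
    pOpColl 𝕊 {s₀} = (⋃ S ∈ 𝕊, convexHull ℝ S) ∧
    (FInvariantColl 𝕊 (⋃ S ∈ 𝕊, convexHull ℝ S) →
      ∀ D' : Set (EuclideanSpace ℝ (Fin d)), FInvariantColl 𝕊 D' → s₀ ∈ D' →
        (⋃ S ∈ 𝕊, convexHull ℝ S) ⊆ D') :=
  stmt15_general 𝕊 s₀ hs₀
end
end
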